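/- Let v₁, v₂, v₃ be an orthogonal basis of ℝ³ with v₁ × v₂ a positive scalar multiple of v₃. Then for all r, s ∈ ℝ, the vector v₃ × ((v₃ − r·v₂) × (v₁ − s·v₃)) is a nonzero scalar multiple of v₁ − r·s·v₂. -/
import Mathlib


open Matrix

theorem vonStaudt_mul (v₁ v₂ v₃ : Fin 3 → ℝ)
    (h1 : v₁ ≠ 0) (h2 : v₂ ≠ 0) (h3 : v₃ ≠ 0)
    (h12 : v₁ ⬝ᵥ v₂ = 0) (h13 : v₁ ⬝ᵥ v₃ = 0) (h23 : v₂ ⬝ᵥ v₃ = 0)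
    (hpos : ∃ l : ℝ, 0 < l ∧ crossProduct v₁ v₂ = l • v₃)
    (r s : ℝ) :
    ∃ c : ℝ, c ≠ 0 ∧
      crossProduct v₃ (crossProduct (v₃ - r • v₂) (v₁ - s • v₃))
        = c • (v₁ - (r * s) • v₂) := by
  refine ⟨-(v₃ ⬝ᵥ v₃), ?_, ?_⟩
  · rw [neg_ne_zero]
    exact fun h => h3 (dotProduct_self_eq_zero.mp h)
  · simp only [dotProduct, Fin.sum_univ_three] at h13 h23 ⊢
    funext i
    simp only [crossProduct, LinearMap.mk₂_apply, Pi.sub_apply, Pi.smul_apply,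
      smul_eq_mul, cons_val_zero, cons_val_one, head_cons, cons_val_two, tail_cons]
    fin_cases i <;>
      simp <;>
      [linear_combination (v₃ 0 - r * v₂ 0) * h13 + r * (v₁ 0 - s * v₃ 0) * h23;
       linear_combination (v₃ 1 - r * v₂ 1) * h13 + r * (v₁ 1 - s * v₃ 1) * h23;
       linear_combination (v₃ 2 - r * v₂ 2) * h13 + r * (v₁ 2 - s * v₃ 2) * h23]
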